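/- arXiv:1810.08605 — 2 statements merged into one kernel-verified Lean document; each statement's English description precedes it below -/
import Mathlib

section
/- Let ρ* ∈ P(∂Ω) be an equilibrium measure with equilibrium potential φ* and λ* := ∫ φ* dρ*. Then λ* > 0. -/
open MeasureTheory Metric Set Filter Topology Pointwise

noncomputable section

abbrev Euc (N : ℕ) := EuclideanSpace ℝ (Fin N)

/-- The set `X` of admissible potentials: Lipschitz with constant 1, vanishing at
infinity, with square-integrable (a.e.-defined) gradient. -/
def memX (N : ℕ) (φ : Euc N → ℝ) : Prop :=
  LipschitzWith 1 φ ∧ Tendsto φ (cocompact (Euc N)) (𝓝 0) ∧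
    Integrable (fun x => ‖gradient φ x‖ ^ 2) (volume : Measure (Euc N))

/-- The Born–Infeld action `I_ρ`. -/
def BIaction (N : ℕ) (ρ : Measure (Euc N)) (φ : Euc N → ℝ) : ℝ :=
  (∫ x, (1 - Real.sqrt (1 - ‖gradient φ x‖ ^ 2))) - ∫ x, φ x ∂ρ

/-- `φ` is a potential for `ρ`: a minimizer of `I_ρ` over `X`. -/
def isPotential (N : ℕ) (ρ : Measure (Euc N)) (φ : Euc N → ℝ) : Prop :=
  memX N φ ∧ ∀ ψ : Euc N → ℝ, memX N ψ → BIaction N ρ φ ≤ BIaction N ρ ψ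

/-- Borel probability measures supported on `∂Ω`. -/
def memP (N : ℕ) (Ω : Set (Euc N)) (ρ : Measure (Euc N)) : Prop :=
  IsProbabilityMeasure ρ ∧ ρ (frontier Ω)ᶜ = 0

/-- Bounded domain. -/
def isBoundedDomain (N : ℕ) (Ω : Set (Euc N)) : Prop :=
  IsOpen Ω ∧ Ω.Nonempty ∧ IsConnected Ω ∧ Bornology.IsBounded Ω

/-- Equilibrium measure with its equilibrium potential. -/
def isEquilibrium (N : ℕ) (Ω : Set (Euc N)) (ρs : Measure (Euc N)) (φs : Euc N → ℝ) : Prop :=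
  memP N Ω ρs ∧ isPotential N ρs φs ∧
    ∀ (μ : Measure (Euc N)) (φμ : Euc N → ℝ), memP N Ω μ → isPotential N μ φμ →
      BIaction N μ φμ ≤ BIaction N ρs φs

/-- The (closed) support of a Borel measure. -/
def msupport (N : ℕ) (ρ : Measure (Euc N)) : Set (Euc N) :=
  {x | ∀ U : Set (Euc N), IsOpen U → x ∈ U → ρ U ≠ 0}

/-- Weak solution of the Born–Infeld equation with datum `ρ`. -/
def isWeakSol (N : ℕ) (ρ : Measure (Euc N)) (φ : Euc N → ℝ) : Prop :=
  ∀ ψ : Euc N → ℝ, ContDiff ℝ (⊤ : ℕ∞) ψ → HasCompactSupport ψ →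
    (∫ x, (inner ℝ (gradient φ x) (gradient ψ x) : ℝ) / Real.sqrt (1 - ‖gradient φ x‖ ^ 2)) =
      ∫ x, ψ x ∂ρ

/-- The `L²`-norm of the gradient. -/
def gradNorm2 (N : ℕ) (φ : Euc N → ℝ) : ℝ :=
  (∫ x, ‖gradient φ x‖ ^ 2) ^ (1/2 : ℝ)


lemma norm_gradient_eq' {N : ℕ} (f : Euc N → ℝ) (x : Euc N) :
    ‖gradient f x‖ = ‖fderiv ℝ f x‖ := by
  rw [gradient]
  exact LinearIsometryEquiv.norm_map _ _

lemma one_sub_sqrt_le' {s : ℝ} (h0 : 0 ≤ s) (h1 : s ≤ 1) : 1 - Real.sqrt (1 - s) ≤ s := by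
  nlinarith [Real.sq_sqrt (by linarith : (0:ℝ) ≤ 1 - s), Real.sqrt_nonneg (1 - s)]

lemma integrable_grad_sq {N : ℕ} (f : Euc N → ℝ) (hf : ContDiff ℝ ((⊤ : ℕ∞) : WithTop ℕ∞) f)
    (hcs : HasCompactSupport f) :
    Integrable (fun x => ‖gradient f x‖ ^ 2) (volume : Measure (Euc N)) := by
  have hfC : Continuous (fderiv ℝ f) := hf.continuous_fderiv (by simp)
  have h1 : Continuous fun x => ‖gradient f x‖ ^ 2 := by
    simp only [norm_gradient_eq']
    exact (hfC.norm).pow 2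
  have h2 : HasCompactSupport fun x => ‖gradient f x‖ ^ 2 := by
    have := hcs.fderiv (𝕜 := ℝ)
    have h3 : HasCompactSupport ((fun v : Euc N →L[ℝ] ℝ => ‖v‖ ^ 2) ∘ (fderiv ℝ f)) :=
      this.comp_left (by simp)
    have h4 : ((fun v : Euc N →L[ℝ] ℝ => ‖v‖ ^ 2) ∘ (fderiv ℝ f))
        = fun x => ‖gradient f x‖ ^ 2 := by
      funext x; simp [Function.comp, norm_gradient_eq']
    rwa [h4] at h3
  exact h1.integrable_of_hasCompactSupport h2

/-- The equilibrium value λ* = ∫ φ* dρ* is strictly positive. -/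
theorem stmt_14 (N : ℕ) (hN : 3 ≤ N) (Ω : Set (Euc N)) (hΩ : isBoundedDomain N Ω)
    (ρs : Measure (Euc N)) (φs : Euc N → ℝ) (heq : isEquilibrium N Ω ρs φs) :
    0 < ∫ x, φs x ∂ρs := by
  obtain ⟨⟨hprob, hnull⟩, ⟨hφX, hmin⟩, -⟩ := heq
  haveI := hprob
  obtain ⟨-, -, -, hbd⟩ := hΩ
  obtain ⟨r, hr⟩ := hbd.subset_closedBall 0
  set R : ℝ := max r 1 with hRdef
  have hR0 : (0:ℝ) < R := lt_of_lt_of_le one_pos (le_max_right _ _)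
  have hΩR : frontier Ω ⊆ closedBall (0 : Euc N) R := by
    refine frontier_subset_closure.trans (closure_minimal ?_ isClosed_closedBall)
    exact hr.trans (closedBall_subset_closedBall (le_max_left _ _))
  -- the bump function
  set b : ContDiffBump (0 : Euc N) := ⟨R, R + 1, hR0, by linarith⟩ with hbdef
  have hbsmooth : ContDiff ℝ ((⊤ : ℕ∞) : WithTop ℕ∞) ⇑b := b.contDiff
  have hbcs : HasCompactSupport ⇑b := b.hasCompactSupport
  have hdb : Differentiable ℝ ⇑b := hbsmooth.differentiable (by simp)
  -- bound on the gradient of b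
  obtain ⟨M, hM⟩ := (hbcs.fderiv (𝕜 := ℝ)).exists_bound_of_continuous
    (hbsmooth.continuous_fderiv (by simp))
  have hM0 : 0 ≤ M := le_trans (norm_nonneg _) (hM 0)
  -- the Dirichlet energy of b
  set K : ℝ := ∫ x, ‖gradient (⇑b) x‖ ^ 2 with hKdef
  have hK0 : 0 ≤ K := integral_nonneg fun x => by positivity
  -- choice of the small parameter t
  set t : ℝ := min (1 / (2 * (K + 1))) (1 / (2 * (M + 1))) with htdef
  have ht0 : 0 < t := lt_min (by positivity) (by positivity)
  have htK : t * K ≤ 1 / 2 := by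
    have h1 : t ≤ 1 / (2 * (K + 1)) := min_le_left _ _
    have h2 : (0:ℝ) < 2 * (K + 1) := by positivity
    have := mul_le_mul_of_nonneg_right h1 hK0
    have h3 : 1 / (2 * (K + 1)) * K ≤ 1 / 2 := by
      rw [div_mul_eq_mul_div, div_le_div_iff₀ h2 (by norm_num)]
      nlinarith
    linarith
  have htM : t * M ≤ 1 / 2 := by
    have h1 : t ≤ 1 / (2 * (M + 1)) := min_le_right _ _
    have h2 : (0:ℝ) < 2 * (M + 1) := by positivity
    have := mul_le_mul_of_nonneg_right h1 hM0
    have h3 : 1 / (2 * (M + 1)) * M ≤ 1 / 2 := by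
      rw [div_mul_eq_mul_div, div_le_div_iff₀ h2 (by norm_num)]
      nlinarith
    linarith
  -- the competitor ψ = t • b
  set ψ : Euc N → ℝ := fun x => t * b x with hψdef
  have hψsmooth : ContDiff ℝ ((⊤ : ℕ∞) : WithTop ℕ∞) ψ := contDiff_const.mul hbsmooth
  have hψcs : HasCompactSupport ψ := by
    have h3 : HasCompactSupport ((fun y : ℝ => t * y) ∘ ⇑b) := hbcs.comp_left (by simp)
    exact h3
  have hψdiff : Differentiable ℝ ψ := hψsmooth.differentiable (by simp)
  have hfψ : ∀ x, fderiv ℝ ψ x = t • fderiv ℝ (⇑b) x := fun x =>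
    fderiv_const_mul (hdb x) t
  have hgψ : ∀ x, ‖gradient ψ x‖ = t * ‖gradient (⇑b) x‖ := by
    intro x
    rw [norm_gradient_eq', hfψ x, norm_smul, norm_gradient_eq',
      Real.norm_eq_abs, abs_of_pos ht0]
  have hgψ_le : ∀ x, ‖gradient ψ x‖ ≤ 1 / 2 := by
    intro x
    rw [hgψ x]
    calc t * ‖gradient (⇑b) x‖ ≤ t * M := by
          refine mul_le_mul_of_nonneg_left ?_ ht0.le
          rw [norm_gradient_eq']; exact hM x
      _ ≤ 1 / 2 := htM
  -- ψ is admissible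
  have hψX : memX N ψ := by
    refine ⟨?_, hψcs.is_zero_at_infty, integrable_grad_sq ψ hψsmooth hψcs⟩
    apply lipschitzWith_of_nnnorm_fderiv_le hψdiff
    intro x
    have : ‖fderiv ℝ ψ x‖ ≤ (1:ℝ) := by
      rw [← norm_gradient_eq']; linarith [hgψ_le x]
    exact_mod_cast this
  -- ∫ ψ dρs = t
  have hintψ : ∫ x, ψ x ∂ρs = t := by
    have hae : ψ =ᵐ[ρs] fun _ => t := by
      have hsub : {x | ψ x ≠ t} ⊆ (frontier Ω)ᶜ := by
        intro x hx
        simp only [mem_compl_iff]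
        intro hxf
        apply hx
        have : b x = 1 := b.one_of_mem_closedBall (hΩR hxf)
        simp [hψdef, this]
      exact measure_mono_null hsub hnull
    rw [integral_congr_ae hae, integral_const]
    simp
  -- energy bound for ψ
  have hgrad_sq : ∀ x, ‖gradient ψ x‖ ^ 2 = t ^ 2 * ‖gradient (⇑b) x‖ ^ 2 := by
    intro x; rw [hgψ x]; ring
  have hint_sq : ∫ x, ‖gradient ψ x‖ ^ 2 = t ^ 2 * K := by
    rw [hKdef, ← integral_const_mul]
    exact integral_congr_ae (Filter.Eventually.of_forall fun x => hgrad_sq x)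
  have hA : (∫ x, (1 - Real.sqrt (1 - ‖gradient ψ x‖ ^ 2))) ≤ t ^ 2 * K := by
    rw [← hint_sq]
    refine integral_mono_of_nonneg (Filter.Eventually.of_forall fun x => ?_)
      (integrable_grad_sq ψ hψsmooth hψcs) (Filter.Eventually.of_forall fun x => ?_)
    · have h1 : 1 - ‖gradient ψ x‖ ^ 2 ≤ 1 := by nlinarith [norm_nonneg (gradient ψ x)]
      have := Real.sqrt_le_one.mpr h1
      simp only [Pi.zero_apply]
      linarith
    · refine one_sub_sqrt_le' (by positivity) ?_
      have := hgψ_le x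
      nlinarith [norm_nonneg (gradient ψ x)]
  have hBIψ : BIaction N ρs ψ < 0 := by
    rw [BIaction, hintψ]
    have htt : t ^ 2 * K ≤ t / 2 := by
      have : t * (t * K) ≤ t * (1 / 2) := mul_le_mul_of_nonneg_left htK ht0.le
      nlinarith
    linarith
  -- conclude
  have hchain : BIaction N ρs φs < 0 := lt_of_le_of_lt (hmin ψ hψX) hBIψ
  have hAφ : 0 ≤ ∫ x, (1 - Real.sqrt (1 - ‖gradient φs x‖ ^ 2)) := by
    refine integral_nonneg fun x => ?_
    have h1 : 1 - ‖gradient φs x‖ ^ 2 ≤ 1 := by nlinarith [norm_nonneg (gradient φs x)]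
    have := Real.sqrt_le_one.mpr h1
    simp only [Pi.zero_apply]
    linarith
  rw [BIaction] at hchain
  linarith
end
end

section
/- Let N ≥ 3 and let n be a natural number with n > N/2. Then there exists a constant C > 0 such that every smooth compactly supported function φ : ℝ^N → ℝ satisfies sup_{x∈ℝ^N} |φ(x)| ≤ C ( (∫_{ℝ^N} |∇φ|² dx)^{1/2} + (∫_{ℝ^N} |∇φ|^{2n} dx)^{1/(2n)} ). -/
open MeasureTheory Metric Set Filter Topology Pointwise

noncomputable section

open scoped ENNReal

section SobolevAux

variable {N : ℕ}

lemma euc_dim : Module.finrank ℝ (Euc N) = N := by simp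

lemma euc_nontrivial (hN : 3 ≤ N) : Nontrivial (Euc N) :=
  Module.nontrivial_of_finrank_pos (R := ℝ) (by rw [euc_dim]; omega)

lemma polar (hN : 3 ≤ N) (f : Euc N → ℝ≥0∞) (hf : Measurable f) :
    ∫⁻ z, f z = ∫⁻ (ω : sphere (0 : Euc N) 1), ∫⁻ t in Ioi (0:ℝ),
      ENNReal.ofReal (t ^ (N - 1)) * f ((t : ℝ) • (ω : Euc N)) ∂volume ∂((volume : Measure (Euc N)).toSphere) := by
  have : Nontrivial (Euc N) := euc_nontrivial hN
  have hmp := (volume : Measure (Euc N)).measurePreserving_homeomorphUnitSphereProd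
  rw [euc_dim] at hmp
  set σ := (volume : Measure (Euc N)).toSphere
  have key : ∫⁻ z, f z ∂(volume : Measure (Euc N)) =
      ∫⁻ p : sphere (0 : Euc N) 1 × Ioi (0:ℝ), f ((p.2 : ℝ) • (p.1 : Euc N))
        ∂(σ.prod (.volumeIoiPow (N - 1))) := by
    have hg : Measurable fun p : sphere (0 : Euc N) 1 × Ioi (0:ℝ) => f ((p.2 : ℝ) • (p.1 : Euc N)) := by
      fun_prop
    rw [← hmp.lintegral_comp hg]
    have : ∫⁻ (x : ({0}ᶜ : Set (Euc N))), f ((((homeomorphUnitSphereProd (Euc N)) x).2 : ℝ) •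
        (((homeomorphUnitSphereProd (Euc N)) x).1 : Euc N)) ∂(Measure.comap Subtype.val volume) =
        ∫⁻ (x : ({0}ᶜ : Set (Euc N))), f x ∂(Measure.comap Subtype.val volume) := by
      refine lintegral_congr fun x => ?_
      congr 1
      rw [homeomorphUnitSphereProd_apply_snd_coe, homeomorphUnitSphereProd_apply_fst_coe,
        smul_smul, mul_inv_cancel₀ (norm_ne_zero_iff.2 x.2), one_smul]
    rw [this, lintegral_subtype_comap (measurableSet_singleton _).compl]
    rw [Measure.restrict_congr_set (by simp : ({0}ᶜ : Set (Euc N)) =ᵐ[volume] univ), Measure.restrict_univ]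
  rw [key, lintegral_prod _ (by fun_prop)]
  refine lintegral_congr fun ω => ?_
  rw [Measure.volumeIoiPow]
  rw [lintegral_withDensity_eq_lintegral_mul _ (by fun_prop) (by fun_prop)]
  simp only [Pi.mul_apply]
  rw [lintegral_subtype_comap measurableSet_Ioi
    (fun t : ℝ => ENNReal.ofReal (t ^ (N - 1)) * f (t • (ω : Euc N)))]

/-- the kernel -/
def K (N : ℕ) (z : Euc N) : ℝ≥0∞ := (ENNReal.ofReal ‖z‖) ^ (1 - (N:ℝ))

lemma K_measurable : Measurable (K N) := by
  unfold K; fun_prop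

lemma ofReal_pow_mul_K (hN : 3 ≤ N) {t : ℝ} (ht : 0 < t) (ω : Euc N) (hω : ‖ω‖ = 1) :
    ENNReal.ofReal (t ^ (N - 1)) * K N (t • ω) = 1 := by
  unfold K
  rw [norm_smul, hω, mul_one, Real.norm_eq_abs, abs_of_pos ht]
  rw [ENNReal.ofReal_pow ht.le, ← ENNReal.rpow_natCast (ENNReal.ofReal t) (N-1),
    ← ENNReal.rpow_add _ _ (by simp [ht]) ENNReal.ofReal_ne_top]
  have : ((N - 1 : ℕ) : ℝ) + (1 - (N:ℝ)) = 0 := by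
    have : ((N - 1 : ℕ) : ℝ) = (N : ℝ) - 1 := by
      rw [Nat.cast_sub (by omega)]; simp
    rw [this]; ring
  rw [this, ENNReal.rpow_zero]

/-- Riesz potential identity -/
lemma riesz (hN : 3 ≤ N) (g : Euc N → ℝ≥0∞) (hg : Measurable g) (x : Euc N) :
    ∫⁻ (ω : sphere (0 : Euc N) 1), (∫⁻ t in Ioi (0:ℝ), g (x + t • (ω : Euc N)) ∂volume)
      ∂((volume : Measure (Euc N)).toSphere)
      = ∫⁻ z, g (x + z) * K N z := by
  rw [polar hN (fun z => g (x + z) * K N z) (((hg.comp (measurable_const_add x)).mul K_measurable))]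
  refine lintegral_congr fun ω => ?_
  refine setLIntegral_congr_fun measurableSet_Ioi (fun t ht => ?_)
  rw [← mul_assoc, mul_comm (ENNReal.ofReal _) (g _), mul_assoc,
    ofReal_pow_mul_K hN ht ω (mem_sphere_zero_iff_norm.mp ω.2), mul_one]

lemma sphere_meas_lt_top (hN : 3 ≤ N) :
    (volume : Measure (Euc N)).toSphere univ < ⊤ := by
  have : Nontrivial (Euc N) := euc_nontrivial hN
  rw [Measure.toSphere_apply_univ]
  exact ENNReal.mul_lt_top (by simp) measure_ball_lt_top

lemma kernel_gen (hN : 3 ≤ N) {c : ℝ} (s : Set (Euc N)) (hsm : MeasurableSet s)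
    (I : Set ℝ) (hIm : MeasurableSet I)
    (hI : ∀ ω : Euc N, ‖ω‖ = 1 → ∀ t : ℝ, 0 < t → (t • ω ∈ s ↔ t ∈ I))
    (hfin : ∫⁻ t in I ∩ Ioi (0:ℝ), ENNReal.ofReal (t ^ ((N:ℝ) - 1 + c)) < ⊤) :
    ∫⁻ z in s, (ENNReal.ofReal ‖z‖) ^ c < ⊤ := by
  have : Nontrivial (Euc N) := euc_nontrivial hN
  have hmeas : Measurable fun z : Euc N => (ENNReal.ofReal ‖z‖) ^ c := by fun_prop
  rw [← lintegral_indicator hsm, polar hN _ (hmeas.indicator hsm)]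
  have hIm' : MeasurableSet (I ∩ Ioi (0:ℝ)) := hIm.inter measurableSet_Ioi
  have inner_eq : ∀ ω : sphere (0 : Euc N) 1,
      (∫⁻ t in Ioi (0:ℝ), ENNReal.ofReal (t ^ (N - 1)) *
        (s.indicator (fun z => (ENNReal.ofReal ‖z‖) ^ c) ((t : ℝ) • (ω : Euc N)))) =
      ∫⁻ t in I ∩ Ioi (0:ℝ), ENNReal.ofReal (t ^ ((N:ℝ) - 1 + c)) := by
    intro ω
    have hω : ‖(ω : Euc N)‖ = 1 := mem_sphere_zero_iff_norm.mp ω.2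
    have step : ∀ t : ℝ, t ∈ Ioi (0:ℝ) →
        ENNReal.ofReal (t ^ (N - 1)) *
          (s.indicator (fun z => (ENNReal.ofReal ‖z‖) ^ c) ((t : ℝ) • (ω : Euc N))) =
        (I ∩ Ioi (0:ℝ)).indicator (fun t => ENNReal.ofReal (t ^ ((N:ℝ) - 1 + c))) t := by
      intro t ht
      rw [mem_Ioi] at ht
      by_cases hts : t • (ω : Euc N) ∈ s
      · rw [indicator_of_mem hts, indicator_of_mem (by exact ⟨(hI ω hω t ht).1 hts, ht⟩)]
        rw [norm_smul, hω, mul_one, Real.norm_eq_abs, abs_of_pos ht,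
          ENNReal.ofReal_pow ht.le,
          ← ENNReal.rpow_natCast (ENNReal.ofReal t) (N-1),
          ← ENNReal.rpow_add _ _ (by simp [ht]) ENNReal.ofReal_ne_top,
          ENNReal.ofReal_rpow_of_pos ht]
        congr 2
        rw [Nat.cast_sub (by omega)]; simp
      · rw [indicator_of_notMem hts, indicator_of_notMem (by
          intro hmem
          exact hts ((hI ω hω t ht).2 hmem.1)), mul_zero]
    rw [setLIntegral_congr_fun measurableSet_Ioi step]
    rw [lintegral_indicator hIm', Measure.restrict_restrict hIm', inter_assoc, inter_self]
  rw [lintegral_congr inner_eq, lintegral_const]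
  exact ENNReal.mul_lt_top hfin (sphere_meas_lt_top hN)

lemma kernel_near (hN : 3 ≤ N) {a : ℝ} (ha : a < N) :
    ∫⁻ z in ball (0:Euc N) 1, (ENNReal.ofReal ‖z‖) ^ (-a) < ⊤ := by
  apply kernel_gen hN _ measurableSet_ball (Iio 1) measurableSet_Iio
  · intro ω hω t ht
    rw [mem_ball, dist_zero_right, norm_smul, hω, mul_one, Real.norm_eq_abs, abs_of_pos ht]
    exact Iff.rfl
  · rw [inter_comm, Ioi_inter_Iio]
    have hInt : IntegrableOn (fun t : ℝ => t ^ ((N:ℝ) - 1 + -a)) (Ioo 0 1) volume := by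
      have h1 : IntervalIntegrable (fun t : ℝ => t ^ ((N:ℝ) - 1 + -a)) volume 0 1 :=
        intervalIntegral.intervalIntegrable_rpow' (by linarith)
      exact ((intervalIntegrable_iff_integrableOn_Ioc_of_le (by norm_num)).1 h1).mono_set
        Ioo_subset_Ioc_self
    exact hInt.lintegral_lt_top

lemma kernel_far (hN : 3 ≤ N) {b : ℝ} (hb : (N:ℝ) < b) :
    ∫⁻ z in (ball (0:Euc N) 1)ᶜ, (ENNReal.ofReal ‖z‖) ^ (-b) < ⊤ := by
  apply kernel_gen hN _ measurableSet_ball.compl (Ici 1) measurableSet_Ici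
  · intro ω hω t ht
    rw [mem_compl_iff, mem_ball, dist_zero_right, norm_smul, hω, mul_one, Real.norm_eq_abs,
      abs_of_pos ht, not_lt, mem_Ici]
  · have : Ici (1:ℝ) ∩ Ioi 0 = Ici 1 := inter_eq_left.mpr (fun t htm => mem_Ioi.mpr (lt_of_lt_of_le zero_lt_one htm))
    rw [this]
    rw [← setLIntegral_congr (Ioi_ae_eq_Ici (a := (1:ℝ)))]
    have hInt : IntegrableOn (fun t : ℝ => t ^ ((N:ℝ) - 1 + -b)) (Ioi 1) volume :=
      integrableOn_Ioi_rpow_of_lt (by linarith) zero_lt_one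
    exact hInt.lintegral_lt_top

lemma grad_norm_eq (φ : Euc N → ℝ) (y : Euc N) :
    ‖gradient φ y‖ = ‖fderiv ℝ φ y‖ := by
  rw [gradient]; exact (InnerProductSpace.toDual ℝ (Euc N)).symm.norm_map _

lemma grad_cont {φ : Euc N → ℝ} (hφ : ContDiff ℝ (⊤ : ℕ∞) φ) : Continuous (gradient φ) := by
  have : gradient φ = fun y => (InnerProductSpace.toDual ℝ (Euc N)).symm (fderiv ℝ φ y) := rfl
  rw [this]
  exact (InnerProductSpace.toDual ℝ (Euc N)).symm.continuous.comp (hφ.continuous_fderiv (by simp))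

lemma ray_bound {φ : Euc N → ℝ} (hφ : ContDiff ℝ (⊤ : ℕ∞) φ) (h2φ : HasCompactSupport φ)
    (x ω : Euc N) (hω : ‖ω‖ = 1) :
    ENNReal.ofReal |φ x| ≤ ∫⁻ t in Ioi (0:ℝ), (‖gradient φ (x + t • ω)‖₊ : ℝ≥0∞) := by
  obtain ⟨R, hR⟩ : ∃ R, tsupport φ ⊆ ball 0 R := by
    obtain ⟨R, hR0, hR⟩ := h2φ.isCompact.isBounded.subset_ball_lt 0 0
    exact ⟨R, hR⟩
  set T : ℝ := ‖x‖ + |R| + 1 with hTdef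
  have hT0 : 0 ≤ T := by positivity
  have hφT : φ (x + T • ω) = 0 := by
    apply image_eq_zero_of_notMem_tsupport
    intro hmem
    have h1 := hR hmem
    rw [mem_ball, dist_zero_right] at h1
    have h2 : ‖(T • ω : Euc N)‖ - ‖-x‖ ≤ ‖x + T • ω‖ := by
      have := norm_sub_norm_le (T • ω) (-x)
      simpa [sub_neg_eq_add, add_comm] using this
    rw [norm_smul, hω, norm_neg] at h2
    simp only [Real.norm_eq_abs, mul_one, abs_of_nonneg hT0] at h2
    have : R ≤ |R| := le_abs_self R
    linarith
  -- derivative along the ray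
  have hd : ∀ t : ℝ, HasDerivAt (fun s : ℝ => φ (x + s • ω)) ((fderiv ℝ φ (x + t • ω)) ω) t := by
    intro t
    have h1 : HasFDerivAt φ (fderiv ℝ φ (x + t • ω)) (x + t • ω) :=
      (hφ.differentiable (by simp) (x + t • ω)).hasFDerivAt
    have hline : HasDerivAt (fun s : ℝ => x + s • ω) ω t := by
      simpa using ((hasDerivAt_id t).smul_const ω).const_add x
    exact h1.comp_hasDerivAt t hline
  have hcont : Continuous fun t : ℝ => (fderiv ℝ φ (x + t • ω)) ω := by
    apply Continuous.clm_apply _ continuous_const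
    exact (hφ.continuous_fderiv (by simp)).comp (by continuity)
  have hconts : Continuous fun t : ℝ => ‖gradient φ (x + t • ω)‖ :=
    ((grad_cont hφ).comp (by continuity)).norm
  have hftc : ∫ s in (0:ℝ)..T, (fderiv ℝ φ (x + s • ω)) ω = φ (x + T • ω) - φ (x + (0:ℝ) • ω) :=
    intervalIntegral.integral_eq_sub_of_hasDerivAt (fun s _ => hd s)
      (hcont.intervalIntegrable 0 T)
  rw [hφT] at hftc
  have hφx : |φ x| = |∫ s in (0:ℝ)..T, (fderiv ℝ φ (x + s • ω)) ω| := by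
    rw [hftc]; simp
  rw [hφx]
  have habs : |∫ s in (0:ℝ)..T, (fderiv ℝ φ (x + s • ω)) ω| ≤
      ∫ s in (0:ℝ)..T, ‖gradient φ (x + s • ω)‖ := by
    refine (intervalIntegral.abs_integral_le_integral_abs hT0).trans ?_
    apply intervalIntegral.integral_mono_on hT0 (hcont.abs.intervalIntegrable 0 T)
      (hconts.intervalIntegrable 0 T)
    intro s _
    calc |(fderiv ℝ φ (x + s • ω)) ω| ≤ ‖fderiv ℝ φ (x + s • ω)‖ * ‖ω‖ :=
          (fderiv ℝ φ (x + s • ω)).le_opNorm ω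
    _ = ‖gradient φ (x + s • ω)‖ := by rw [hω, mul_one, grad_norm_eq]
  refine (ENNReal.ofReal_le_ofReal habs).trans ?_
  rw [intervalIntegral.integral_of_le hT0,
    ofReal_integral_eq_lintegral_ofReal ((hconts.integrableOn_Ioc))
      (Filter.Eventually.of_forall fun s => norm_nonneg _)]
  refine (lintegral_mono_set Ioc_subset_Ioi_self).trans ?_
  refine le_of_eq (lintegral_congr fun t => ?_)
  rw [← coe_nnnorm, ENNReal.ofReal_coe_nnreal]

end SobolevAux


/-- Embedding estimate for X_{2n}: for n > N/2 there is C > 0 with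
‖φ‖_∞ ≤ C (‖∇φ‖_{L²} + ‖∇φ‖_{L^{2n}}) for all φ ∈ C_c^∞(ℝ^N). -/
theorem stmt_18 (N : ℕ) (hN : 3 ≤ N) (n : ℕ) (hn : (N : ℝ) / 2 < n) :
    ∃ C : ℝ, 0 < C ∧ ∀ φ : Euc N → ℝ, ContDiff ℝ (⊤ : ℕ∞) φ → HasCompactSupport φ →
      ∀ x : Euc N, |φ x| ≤
        C * ((∫ y, ‖gradient φ y‖ ^ 2) ^ (1 / 2 : ℝ) +
          (∫ y, ‖gradient φ y‖ ^ (2 * n)) ^ (1 / (2 * (n : ℝ)))) := by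
  have hNn : Nontrivial (Euc N) := euc_nontrivial hN
  have hN3 : (3:ℝ) ≤ (N:ℝ) := by exact_mod_cast hN
  set p : ℝ := 2 * (n:ℝ) with hpdef
  have hNp : (N:ℝ) < p := by rw [hpdef]; linarith
  have hp1 : 1 < p := by linarith
  set q : ℝ := p.conjExponent with hqdef
  have hpq : p.HolderConjugate q := Real.HolderConjugate.conjExponent hp1
  have hq0 : 0 < q := hpq.symm.pos
  have hqeq : q = p / (p - 1) := rfl
  have ha : ((N:ℝ) - 1) * q < N := by
    have h1 : ((N:ℝ) - 1) * q = ((N:ℝ) - 1) * p / (p - 1) := by rw [hqeq]; ring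
    rw [h1, div_lt_iff₀ (by linarith : (0:ℝ) < p - 1)]
    nlinarith
  -- the two kernel constants
  set A := (∫⁻ z in ball (0:Euc N) 1, (K N z) ^ q) ^ (1/q) with hAdef
  set B := (∫⁻ z in (ball (0:Euc N) 1)ᶜ, (K N z) ^ (2:ℝ)) ^ (1/(2:ℝ)) with hBdef
  have hKq : ∀ z : Euc N, (K N z) ^ q = (ENNReal.ofReal ‖z‖) ^ (-(((N:ℝ) - 1) * q)) := by
    intro z; rw [K, ← ENNReal.rpow_mul]; congr 1; ring
  have hK2 : ∀ z : Euc N, (K N z) ^ (2:ℝ) = (ENNReal.ofReal ‖z‖) ^ (-(2*(N:ℝ) - 2)) := by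
    intro z; rw [K, ← ENNReal.rpow_mul]; congr 1; ring
  have hAne : A ≠ ⊤ := by
    rw [hAdef]
    apply ENNReal.rpow_ne_top_of_nonneg (by positivity)
    rw [setLIntegral_congr_fun measurableSet_ball
      (fun z _ => hKq z)]
    exact (kernel_near hN ha).ne
  have hBne : B ≠ ⊤ := by
    rw [hBdef]
    apply ENNReal.rpow_ne_top_of_nonneg (by positivity)
    rw [setLIntegral_congr_fun measurableSet_ball.compl
      (fun z _ => hK2 z)]
    exact (kernel_far hN (by linarith)).ne
  set S := (volume : Measure (Euc N)).toSphere univ with hSdef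
  have hS0 : S ≠ 0 := by
    rw [hSdef, Measure.toSphere_apply_univ]
    exact mul_ne_zero (by simp; omega) (measure_ball_pos volume 0 one_pos).ne'
  have hST : S ≠ ⊤ := (sphere_meas_lt_top hN).ne
  have hSt : 0 < S.toReal := ENNReal.toReal_pos hS0 hST
  refine ⟨(A.toReal + B.toReal + 1) / S.toReal, by positivity, ?_⟩
  intro φ hφ h2φ x
  -- gradient facts
  have hgc : Continuous (gradient φ) := grad_cont hφ
  have hgcs : HasCompactSupport (gradient φ) := by
    have hf : HasCompactSupport (fderiv ℝ φ) := h2φ.fderiv (𝕜 := ℝ)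
    exact hf.comp_left (by simp)
  set g : Euc N → ℝ≥0∞ := fun y => (‖gradient φ y‖₊ : ℝ≥0∞) with hgdef
  have hgm : Measurable g := hgc.nnnorm.measurable.coe_nnreal_ennreal
  have intk : ∀ k : ℕ, 0 < k → Integrable (fun y : Euc N => ‖gradient φ y‖ ^ k) := by
    intro k hk
    apply Continuous.integrable_of_hasCompactSupport (hgc.norm.pow k)
    exact hgcs.comp_left (g := fun v : Euc N => ‖v‖ ^ k) (by simp [zero_pow hk.ne'])
  have keyk : ∀ k : ℕ, 0 < k → ∫⁻ y, g y ^ (k:ℝ) =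
      ENNReal.ofReal (∫ y, ‖gradient φ y‖ ^ k) := by
    intro k hk
    rw [ofReal_integral_eq_lintegral_ofReal (intk k hk)
      (Filter.Eventually.of_forall fun y => by positivity)]
    refine lintegral_congr fun y => ?_
    rw [ENNReal.rpow_natCast, ENNReal.ofReal_pow (norm_nonneg _), ← coe_nnnorm, ENNReal.ofReal_coe_nnreal]
  have transl : ∀ c : ℝ, ∫⁻ z, g (x + z) ^ c = ∫⁻ y, g y ^ c := by
    intro c
    have : (fun z => g (x + z) ^ c) = fun z => (fun y => g y ^ c) (z + x) := by
      funext z; rw [add_comm]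
    rw [this, lintegral_add_right_eq_self (fun y => g y ^ c) x]
  -- main ENNReal estimate
  have near : ∫⁻ z in ball (0:Euc N) 1, g (x + z) * K N z ≤ (∫⁻ y, g y ^ p) ^ (1/p) * A := by
    calc ∫⁻ z in ball (0:Euc N) 1, g (x + z) * K N z
        ≤ (∫⁻ z in ball (0:Euc N) 1, g (x + z) ^ p) ^ (1/p) *
          (∫⁻ z in ball (0:Euc N) 1, (K N z) ^ q) ^ (1/q) :=
          ENNReal.lintegral_mul_le_Lp_mul_Lq _ hpq
            ((hgm.comp (measurable_const_add x)).aemeasurable) K_measurable.aemeasurable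
      _ ≤ (∫⁻ y, g y ^ p) ^ (1/p) * A := by
          rw [hAdef]
          apply mul_le_mul_left
          apply ENNReal.rpow_le_rpow _ (by positivity)
          rw [← transl p]
          exact setLIntegral_le_lintegral _ _
  have far : ∫⁻ z in (ball (0:Euc N) 1)ᶜ, g (x + z) * K N z ≤
      (∫⁻ y, g y ^ (2:ℝ)) ^ (1/(2:ℝ)) * B := by
    calc ∫⁻ z in (ball (0:Euc N) 1)ᶜ, g (x + z) * K N z
        ≤ (∫⁻ z in (ball (0:Euc N) 1)ᶜ, g (x + z) ^ (2:ℝ)) ^ (1/(2:ℝ)) *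
          (∫⁻ z in (ball (0:Euc N) 1)ᶜ, (K N z) ^ (2:ℝ)) ^ (1/(2:ℝ)) :=
          ENNReal.lintegral_mul_le_Lp_mul_Lq _ Real.HolderConjugate.two_two
            ((hgm.comp (measurable_const_add x)).aemeasurable) K_measurable.aemeasurable
      _ ≤ (∫⁻ y, g y ^ (2:ℝ)) ^ (1/(2:ℝ)) * B := by
          rw [hBdef]
          apply mul_le_mul_left
          apply ENNReal.rpow_le_rpow _ (by positivity)
          rw [← transl 2]
          exact setLIntegral_le_lintegral _ _
  have main : S * ENNReal.ofReal |φ x| ≤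
      (∫⁻ y, g y ^ p) ^ (1/p) * A + (∫⁻ y, g y ^ (2:ℝ)) ^ (1/(2:ℝ)) * B := by
    calc S * ENNReal.ofReal |φ x|
        = ∫⁻ (_ω : sphere (0:Euc N) 1), ENNReal.ofReal |φ x|
            ∂((volume : Measure (Euc N)).toSphere) := by
          rw [lintegral_const, mul_comm]
      _ ≤ ∫⁻ (ω : sphere (0:Euc N) 1), (∫⁻ t in Ioi (0:ℝ), g (x + t • (ω : Euc N)) ∂volume)
            ∂((volume : Measure (Euc N)).toSphere) :=
          lintegral_mono fun ω => ray_bound hφ h2φ x ω (mem_sphere_zero_iff_norm.mp ω.2)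
      _ = ∫⁻ z, g (x + z) * K N z := riesz hN g hgm x
      _ = (∫⁻ z in ball (0:Euc N) 1, g (x + z) * K N z) +
            ∫⁻ z in (ball (0:Euc N) 1)ᶜ, g (x + z) * K N z :=
          (lintegral_add_compl _ measurableSet_ball).symm
      _ ≤ _ := add_le_add near far
  -- convert to reals
  set I2 : ℝ := ∫ y, ‖gradient φ y‖ ^ 2 with hI2def
  set I2n : ℝ := ∫ y, ‖gradient φ y‖ ^ (2 * n) with hI2ndef
  have hI2nn : 0 ≤ I2 := integral_nonneg fun y => by positivity
  have hI2nnn : 0 ≤ I2n := integral_nonneg fun y => by positivity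
  have e2 : ∫⁻ y, g y ^ (2:ℝ) = ENNReal.ofReal I2 := by
    have := keyk 2 (by norm_num)
    rw [hI2def]; exact_mod_cast this
  have hn0 : 0 < n := by
    rcases n with _ | m
    · norm_num at hn; linarith
    · omega
  have e2n : ∫⁻ y, g y ^ p = ENNReal.ofReal I2n := by
    have := keyk (2 * n) (by omega)
    rw [hI2ndef, ← this]
    congr 1
    rw [hpdef]; push_cast; ring
  rw [e2, e2n, ENNReal.ofReal_rpow_of_nonneg hI2nnn (by positivity),
    ENNReal.ofReal_rpow_of_nonneg hI2nn (by norm_num)] at main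
  -- take toReal
  have hRne : ENNReal.ofReal (I2n ^ (1/p)) * A + ENNReal.ofReal (I2 ^ (1/(2:ℝ))) * B ≠ ⊤ :=
    ENNReal.add_ne_top.2 ⟨ENNReal.mul_ne_top ENNReal.ofReal_ne_top hAne,
      ENNReal.mul_ne_top ENNReal.ofReal_ne_top hBne⟩
  have main2 := ENNReal.toReal_mono hRne main
  rw [ENNReal.toReal_mul, ENNReal.toReal_add (ENNReal.mul_ne_top ENNReal.ofReal_ne_top hAne)
      (ENNReal.mul_ne_top ENNReal.ofReal_ne_top hBne), ENNReal.toReal_mul, ENNReal.toReal_mul,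
    ENNReal.toReal_ofReal (abs_nonneg _), ENNReal.toReal_ofReal (by positivity),
    ENNReal.toReal_ofReal (by positivity)] at main2
  -- final arithmetic
  rw [div_mul_eq_mul_div, le_div_iff₀ hSt]
  have hAt : 0 ≤ A.toReal := ENNReal.toReal_nonneg
  have hBt : 0 ≤ B.toReal := ENNReal.toReal_nonneg
  have h1 : 0 ≤ I2 ^ ((1:ℝ)/2) := by positivity
  have h2 : 0 ≤ I2n ^ (1/p) := by positivity
  nlinarith [main2, mul_nonneg hAt h1, mul_nonneg hBt h2]
end
end
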